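/- Let −1 < p ≤ 0. For all real x, 𝓘_{p+1}(x)/𝓘_p(x) + (p+2)·𝓘_p(x)/(1 + (p+1)·𝓘_p(x)) ≥ 2. -/

import Mathlib

open Real

noncomputable def besselJn (p x : ℝ) : ℝ :=
  ∑' n : ℕ, (-(1:ℝ)/4)^n * x^(2*n) / ((Real.Gamma (p+n+1) / Real.Gamma (p+1)) * n.factorial)

noncomputable def besselIn (p x : ℝ) : ℝ :=
  ∑' n : ℕ, ((1:ℝ)/4)^n * x^(2*n) / ((Real.Gamma (p+n+1) / Real.Gamma (p+1)) * n.factorial)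

noncomputable def besselJ (p x : ℝ) : ℝ :=
  ∑' n : ℕ, (-1:ℝ)^n * (x/2)^(p+2*n) / (n.factorial * Real.Gamma (p+n+1))

/-!
Put `t = x² / 4` and `s = p + 1 ∈ (0, 1]`. Then `𝓘_p(x) = B = ∑ bₙ` and `𝓘_{p+1}(x) = A = ∑ aₙ`
with `bₙ = tⁿ / ((s)ₙ n!)` and `aₙ = s / (s + n) · bₙ`, and after clearing denominators the
inequality reads `2B - A ≤ (sA + (1 - s)B) B`. The right-hand side is a Cauchy product, so it
suffices to compare coefficients. Since `(s)_{i+j} ≥ (s)ᵢ (s)ⱼ` and `(i+j)! ≥ i! j!`, we have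
`b_{i+j} ≤ bᵢ bⱼ`, so the `n`-th coefficient on the right is at least
`bₙ ∑_{k ≤ n} (s² / (s + k) + 1 - s)`, and by induction on `n` this weight sum is at least
`2 - s / (s + n)`, the `n`-th coefficient on the left divided by `bₙ`.
-/
open Finset Polynomial Nat

theorem Real.Gamma_add_nat_div_Gamma_eq {s : ℝ} (hs : 0 < s) (n : ℕ) :
    Gamma (s + n) / Gamma s = (ascPochhammer ℝ n).eval s := by
  induction n with
  | zero => simp [(Gamma_pos_of_pos hs).ne']
  | succ n ih =>
    rw [Nat.cast_succ, ← add_assoc, Gamma_add_one (by positivity), ascPochhammer_succ_eval, ← ih]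
    ring

theorem ascPochhammer_eval_mul_le_eval_add {S : Type*} [CommSemiring S] [PartialOrder S]
    [IsStrictOrderedRing S] {s : S} (hs : 0 < s) (k m : ℕ) :
    (ascPochhammer S k).eval s * (ascPochhammer S m).eval s ≤ (ascPochhammer S (k + m)).eval s := by
  induction m with
  | zero => simp
  | succ m ih =>
    rw [← add_assoc, ascPochhammer_succ_eval, ascPochhammer_succ_eval, ← mul_assoc]
    gcongr
    · exact (ascPochhammer_pos _ _ hs).le
    · exact_mod_cast Nat.le_add_left m k

noncomputable def besselITerm (s t : ℝ) (n : ℕ) : ℝ :=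
  t ^ n / ((ascPochhammer ℝ n).eval s * n !)

theorem besselIn_eq_tsum_besselITerm {p : ℝ} (hp : -1 < p) (x : ℝ) :
    besselIn p x = ∑' n, besselITerm (p + 1) (x ^ 2 / 4) n := by
  refine tsum_congr fun n => ?_
  rw [besselITerm, add_right_comm, ← Real.Gamma_add_nat_div_Gamma_eq (by linarith), div_pow (x ^ 2),
    ← pow_mul, one_div, inv_pow]
  ring

section besselITerm

variable {s t : ℝ}

theorem besselITerm_zero_right : besselITerm s t 0 = 1 := by
  simp [besselITerm]

theorem besselITerm_nonneg (hs : 0 < s) (ht : 0 ≤ t) (n : ℕ) : 0 ≤ besselITerm s t n :=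
  div_nonneg (pow_nonneg ht n) (mul_nonneg (ascPochhammer_pos n s hs).le (Nat.cast_nonneg _))

theorem besselITerm_succ (n : ℕ) :
    besselITerm s t (n + 1) = besselITerm s t n * (t / ((s + n) * (n + 1))) := by
  rw [besselITerm, besselITerm, _root_.div_mul_div_comm, ascPochhammer_succ_eval, factorial_succ,
    pow_succ]
  push_cast
  ring

theorem besselITerm_add_one_left (hs : 0 < s) (n : ℕ) :
    besselITerm (s + 1) t n = s / (s + n) * besselITerm s t n := by
  have h : (ascPochhammer ℝ n).eval (s + 1) = (ascPochhammer ℝ n).eval s * (s + n) / s := by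
    rw [eq_div_iff hs.ne', mul_comm, ← ascPochhammer_succ_eval, ascPochhammer_succ_left]
    simp
  have := ascPochhammer_pos n s hs
  have : (0 : ℝ) < s + n := by positivity
  rw [besselITerm, besselITerm, h]
  field_simp

theorem besselITerm_add_le (hs : 0 < s) (ht : 0 ≤ t) (k m : ℕ) :
    besselITerm s t (k + m) ≤ besselITerm s t k * besselITerm s t m := by
  have hk := ascPochhammer_pos k s hs
  have hm := ascPochhammer_pos m s hs
  have hfac : (k ! * m ! : ℝ) ≤ (k + m)! := by
    exact_mod_cast
      Nat.le_of_dvd (k + m).factorial_pos (factorial_mul_factorial_dvd_factorial_add k m)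
  rw [besselITerm, besselITerm, besselITerm, _root_.div_mul_div_comm, ← pow_add]
  refine div_le_div_of_nonneg_left (by positivity) (by positivity) ?_
  calc _ = (ascPochhammer ℝ k).eval s * (ascPochhammer ℝ m).eval s * (k ! * m ! : ℝ) := by ring
    _ ≤ _ := mul_le_mul (ascPochhammer_eval_mul_le_eval_add hs k m) hfac (by positivity)
      (ascPochhammer_pos _ s hs).le

theorem summable_besselITerm (hs : 0 < s) (ht : 0 ≤ t) : Summable (besselITerm s t) := by
  obtain ⟨N, hN⟩ := exists_nat_gt (2 * t)
  refine summable_of_ratio_norm_eventually_le (r := 1 / 2) (by norm_num) ?_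
  filter_upwards [Filter.eventually_ge_atTop N] with n hn
  have hnN : (N : ℝ) ≤ n := by exact_mod_cast hn
  rw [Real.norm_of_nonneg (besselITerm_nonneg hs ht _),
    Real.norm_of_nonneg (besselITerm_nonneg hs ht _), besselITerm_succ, mul_comm (1 / 2)]
  refine mul_le_mul_of_nonneg_left ?_ (besselITerm_nonneg hs ht n)
  rw [div_le_iff₀ (by positivity)]
  nlinarith

theorem one_le_tsum_besselITerm (hs : 0 < s) (ht : 0 ≤ t) :
    1 ≤ ∑' n, besselITerm s t n := by
  simpa only [besselITerm_zero_right] using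
    (summable_besselITerm hs ht).le_tsum 0 fun n _ => besselITerm_nonneg hs ht n

theorem two_sub_div_le_sum_range (hs : 0 < s) (hs1 : s ≤ 1) (n : ℕ) :
    2 - s / (s + n) ≤ ∑ k ∈ range (n + 1), (s ^ 2 / (s + k) + (1 - s)) := by
  induction n with
  | zero => norm_num [sq, hs.ne']
  | succ n ih =>
    rw [sum_range_succ]
    suffices s / (s + n) - s / (s + (n + 1 : ℕ)) ≤ s ^ 2 / (s + (n + 1 : ℕ)) + (1 - s) by
      linarith
    have hn : (0 : ℝ) ≤ n := n.cast_nonneg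
    rw [Nat.cast_succ, div_sub_div _ _ (by positivity) (by positivity),
      div_add' _ _ _ (by positivity),
      div_le_div_iff₀ (by positivity) (by positivity)]
    have h : 0 ≤ s ^ 2 + (1 - s) * (2 * s + n + 1) := by nlinarith
    nlinarith [mul_nonneg (mul_nonneg hn h) (by positivity : (0 : ℝ) ≤ s + (n + 1))]

theorem two_mul_besselITerm_sub_le_sum_antidiagonal (hs : 0 < s) (hs1 : s ≤ 1) (ht : 0 ≤ t)
    (n : ℕ) :
    2 * besselITerm s t n - besselITerm (s + 1) t n ≤
      ∑ ij ∈ antidiagonal n,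
        (s * besselITerm (s + 1) t ij.1 + (1 - s) * besselITerm s t ij.1) *
          besselITerm s t ij.2 := by
  have hw : ∀ k : ℕ, 0 ≤ s ^ 2 / (s + k) + (1 - s) := fun k =>
    add_nonneg (by positivity) (sub_nonneg.2 hs1)
  calc 2 * besselITerm s t n - besselITerm (s + 1) t n
      = (2 - s / (s + n)) * besselITerm s t n := by rw [besselITerm_add_one_left hs]; ring
    _ ≤ (∑ k ∈ range (n + 1), (s ^ 2 / (s + k) + (1 - s))) * besselITerm s t n :=
      mul_le_mul_of_nonneg_right (two_sub_div_le_sum_range hs hs1 n) (besselITerm_nonneg hs ht n)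
    _ = ∑ ij ∈ antidiagonal n, (s ^ 2 / (s + ij.1) + (1 - s)) * besselITerm s t (ij.1 + ij.2) := by
      rw [sum_mul, Nat.sum_antidiagonal_eq_sum_range_succ_mk]
      refine sum_congr rfl fun k hk => ?_
      rw [Nat.add_sub_cancel' (Nat.lt_succ_iff.1 (mem_range.1 hk))]
    _ ≤ ∑ ij ∈ antidiagonal n,
          (s ^ 2 / (s + ij.1) + (1 - s)) * (besselITerm s t ij.1 * besselITerm s t ij.2) :=
      sum_le_sum fun ij _ => mul_le_mul_of_nonneg_left (besselITerm_add_le hs ht _ _) (hw _)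
    _ = _ := sum_congr rfl fun ij _ => by rw [besselITerm_add_one_left hs]; ring

theorem two_mul_tsum_besselITerm_sub_le (hs : 0 < s) (hs1 : s ≤ 1) (ht : 0 ≤ t) :
    2 * ∑' n, besselITerm s t n - ∑' n, besselITerm (s + 1) t n ≤
      (s * ∑' n, besselITerm (s + 1) t n + (1 - s) * ∑' n, besselITerm s t n) *
        ∑' n, besselITerm s t n := by
  set a := besselITerm (s + 1) t
  set b := besselITerm s t
  have ha := summable_besselITerm (by linarith : 0 < s + 1) ht
  have hb := summable_besselITerm hs ht
  set f := fun n => s * a n + (1 - s) * b n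
  have hf : Summable f := (ha.mul_left s).add (hb.mul_left (1 - s))
  have hf0 : 0 ≤ f := fun n => add_nonneg
    (mul_nonneg hs.le (besselITerm_nonneg (by linarith) ht n))
    (mul_nonneg (sub_nonneg.2 hs1) (besselITerm_nonneg hs ht n))
  have hfb := hf.mul_of_nonneg hb hf0 (besselITerm_nonneg hs ht)
  calc 2 * ∑' n, b n - ∑' n, a n = ∑' n, (2 * b n - a n) := by
        rw [(hb.mul_left 2).tsum_sub ha, tsum_mul_left]
    _ ≤ ∑' n, ∑ ij ∈ antidiagonal n, f ij.1 * b ij.2 :=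
      ((hb.mul_left 2).sub ha).tsum_le_tsum (two_mul_besselITerm_sub_le_sum_antidiagonal hs hs1 ht)
        (summable_sum_mul_antidiagonal_of_summable_mul hfb)
    _ = (∑' n, f n) * ∑' n, b n := (hf.tsum_mul_tsum_eq_tsum_sum_antidiagonal hb hfb).symm
    _ = _ := by rw [(ha.mul_left s).tsum_add (hb.mul_left (1 - s)), tsum_mul_left, tsum_mul_left]

end besselITerm

theorem huygens_type_modified (p : ℝ) (hp1 : -1 < p) (hp2 : p ≤ 0) (x : ℝ) :
    besselIn (p+1) x / besselIn p x + (p+2) * besselIn p x / (1 + (p+1) * besselIn p x) ≥ 2 := by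
  have hs : 0 < p + 1 := by linarith
  have ht : 0 ≤ x ^ 2 / 4 := by positivity
  rw [besselIn_eq_tsum_besselITerm hp1, besselIn_eq_tsum_besselITerm (by linarith : -1 < p + 1)]
  have key := two_mul_tsum_besselITerm_sub_le hs (by linarith) ht
  have hB := one_le_tsum_besselITerm hs ht
  set A := ∑' n, besselITerm (p + 1 + 1) (x ^ 2 / 4) n
  set B := ∑' n, besselITerm (p + 1) (x ^ 2 / 4) n
  have hden : 0 < 1 + (p + 1) * B := by positivity
  rw [ge_iff_le, div_add_div _ _ (by positivity) hden.ne', le_div_iff₀ (by positivity)]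
  nlinarith
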